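/- Let S ⊆ T be a subspace such that either dim S ≤ dim T − p or S = T, and let ω ∈ ⋀^{p+1} T* be any alternating (p+1)-form on T. Then the subspace L := {(X, ι_X ω + α) : X ∈ S, α ∈ ⋀^p S°} of E^p is Lagrangian, and pr_T(L) = S. -/

import Mathlib

/-!
Isotropy: on two elements `(X, ι_X ω + α)`, `(Y, ι_Y ω + β)` of `L` the pairing reduces to
`ι_Y ι_X ω + ι_X ι_Y ω`, which vanishes because `ω` is alternating.

Maximality: if `(Y, β)` is orthogonal to `L`, pairing it with the elements `(0, α)` gives `ι_Y α = 0`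
for every `α ∈ ⋀^p S°`. When `S` has codimension at least `p` this forces `Y ∈ S`: otherwise extend
the image of `Y` in `T ⧸ S` to an independent family of length `p`, and the determinant of the dual
coordinate functionals, pulled back to `T`, is an `α ∈ ⋀^p S°` with `ι_Y α ≠ 0`. Pairing with
`(Z, ι_Z ω)` for `Z ∈ S` then shows `β - ι_Y ω ∈ ⋀^p S°`.
-/

open Module

/-- `E^p` for `p = q+1`: the vector space `T ⊕ ⋀^{q+1} T*`. -/
abbrev EP (T : Type) [AddCommGroup T] [Module ℝ T] (q : ℕ) :=
  T × (T [⋀^Fin (q+1)]→ₗ[ℝ] ℝ)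

variable {T : Type} [AddCommGroup T] [Module ℝ T]

/-- The `⋀^q T*`-valued pairing on `E^{q+1}`: `⟨(X,α),(Y,β)⟩ = ι_X β + ι_Y α`. -/
noncomputable def pairing {q : ℕ} (e₁ e₂ : EP T q) : T [⋀^Fin q]→ₗ[ℝ] ℝ :=
  e₂.2.curryLeft e₁.1 + e₁.2.curryLeft e₂.1

def orthSet {q : ℕ} (L : Set (EP T q)) : Set (EP T q) :=
  {e | ∀ l ∈ L, pairing e l = 0}

def IsIsotropic {q : ℕ} (L : Set (EP T q)) : Prop :=
  ∀ e₁ ∈ L, ∀ e₂ ∈ L, pairing e₁ e₂ = 0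

namespace AlternatingMap

variable {R M N : Type*} [CommRing R] [AddCommGroup M] [Module R M] [AddCommGroup N] [Module R N]

theorem curryLeft_curryLeft_add_swap {n : ℕ} (f : M [⋀^Fin (n + 2)]→ₗ[R] N) (x y : M) :
    (f.curryLeft x).curryLeft y + (f.curryLeft y).curryLeft x = 0 := by
  have h := f.curryLeft_same (x + y)
  simp only [map_add, curryLeft_add, LinearMap.add_apply, curryLeft_same] at h
  rwa [zero_add, add_zero, add_comm] at h

theorem curryLeft_curryLeft_swap {n : ℕ} (f : M [⋀^Fin (n + 2)]→ₗ[R] N) (x y : M) :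
    (f.curryLeft x).curryLeft y = -(f.curryLeft y).curryLeft x :=
  eq_neg_of_add_eq_zero_left (f.curryLeft_curryLeft_add_swap x y)

end AlternatingMap

section Field

variable {K V : Type*} [Field K] [AddCommGroup V] [Module K V]

theorem exists_linearIndependent_vecCons_of_lt_finrank {y : V} (hy : y ≠ 0) :
    ∀ {n : ℕ}, n < finrank K V → ∃ v : Fin n → V, LinearIndependent K (Matrix.vecCons y v)
  | 0, _ => ⟨![], linearIndependent_unique_iff.mpr hy⟩
  | n + 1, hn => by
    obtain ⟨v, hv⟩ := exists_linearIndependent_vecCons_of_lt_finrank hy (n := n) (by omega)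
    obtain ⟨x, hx⟩ := exists_linearIndependent_snoc_of_lt_finrank hv hn
    exact ⟨Fin.snoc v x, by rwa [Matrix.vecCons, Fin.cons_snoc_eq_snoc_cons]⟩

theorem LinearIndependent.exists_linearMap_pi_apply_eq_single {ι : Type*} [Fintype ι]
    [DecidableEq ι] {v : ι → V} (hv : LinearIndependent K v) :
    ∃ f : V →ₗ[K] ι → K, ∀ i, f (v i) = Pi.single i 1 := by
  have hker : LinearMap.ker (Fintype.linearCombination K v) = ⊥ :=
    LinearMap.ker_eq_bot_of_injective
      (linearIndependent_iff_injective_fintypeLinearCombination.mp hv)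
  obtain ⟨f, hf⟩ := LinearMap.exists_leftInverse_of_injective _ hker
  exact ⟨f, fun i => by simpa using LinearMap.congr_fun hf (Pi.single i 1)⟩

theorem LinearIndependent.exists_alternatingMap_apply_eq_one {n : ℕ} {v : Fin n → V}
    (hv : LinearIndependent K v) : ∃ β : V [⋀^Fin n]→ₗ[K] K, β v = 1 := by
  classical
  obtain ⟨f, hf⟩ := hv.exists_linearMap_pi_apply_eq_single
  refine ⟨Matrix.detRowAlternating.compLinearMap f, ?_⟩
  have hfv : (fun i => f (v i)) = (1 : Matrix (Fin n) (Fin n) K) :=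
    funext fun i => (hf i).trans (funext fun j => Matrix.one_eq_pi_single.symm)
  rw [AlternatingMap.compLinearMap_apply, hfv]
  exact Matrix.det_one

theorem Submodule.mem_of_forall_curryLeft_eq_zero (S : Submodule K V) {n : ℕ}
    (hn : n < finrank K (V ⧸ S)) {y : V}
    (h : ∀ α : V [⋀^Fin (n + 1)]→ₗ[K] K, (∀ z ∈ S, α.curryLeft z = 0) → α.curryLeft y = 0) :
    y ∈ S := by
  by_contra hy
  obtain ⟨v, hv⟩ := exists_linearIndependent_vecCons_of_lt_finrank
    (by simpa [Submodule.Quotient.mk_eq_zero] using hy : S.mkQ y ≠ 0) hn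
  obtain ⟨β, hβ⟩ := hv.exists_alternatingMap_apply_eq_one
  have hβS : ∀ z ∈ S, (β.compLinearMap S.mkQ).curryLeft z = 0 := fun z hz => by
    rw [AlternatingMap.curryLeft_compLinearMap, (S.mkQ_apply z).trans
      ((Submodule.Quotient.mk_eq_zero S).mpr hz), map_zero, AlternatingMap.zero_compLinearMap]
  choose w hw using fun i => S.mkQ_surjective (v i)
  have hlift : (fun i => S.mkQ (Matrix.vecCons y w i)) = Matrix.vecCons (S.mkQ y) v := by
    funext i
    cases i using Fin.cases <;> simp [hw]
  have hβy := congr($(h _ hβS) w)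
  rw [AlternatingMap.curryLeft_apply_apply, AlternatingMap.compLinearMap_apply, hlift, hβ,
    AlternatingMap.zero_apply] at hβy
  exact one_ne_zero hβy

end Field

def twistedConormal {q : ℕ} (S : Submodule ℝ T) (ω : T [⋀^Fin (q+2)]→ₗ[ℝ] ℝ) : Set (EP T q) :=
  {e | ∃ X ∈ S, ∃ α : T [⋀^Fin (q+1)]→ₗ[ℝ] ℝ,
    (∀ Z ∈ S, α.curryLeft Z = 0) ∧ e = (X, ω.curryLeft X + α)}

section TwistedConormal

variable {q : ℕ} (S : Submodule ℝ T) (ω : T [⋀^Fin (q+2)]→ₗ[ℝ] ℝ)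

theorem isIsotropic_twistedConormal : IsIsotropic (twistedConormal S ω) := by
  rintro _ ⟨X, hX, α, hα, rfl⟩ _ ⟨Y, hY, β, hβ, rfl⟩
  simp only [pairing, AlternatingMap.curryLeft_add, LinearMap.add_apply, hβ X hX, hα Y hY,
    add_zero]
  exact ω.curryLeft_curryLeft_add_swap Y X

theorem orthSet_twistedConormal_subset (hS : q < finrank ℝ (T ⧸ S) ∨ S = ⊤) :
    orthSet (twistedConormal S ω) ⊆ twistedConormal S ω := by
  rintro ⟨Y, β⟩ he
  have hpair : ∀ X ∈ S, ∀ α : T [⋀^Fin (q+1)]→ₗ[ℝ] ℝ, (∀ Z ∈ S, α.curryLeft Z = 0) →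
      (ω.curryLeft X + α).curryLeft Y + β.curryLeft X = 0 :=
    fun X hX α hα => he _ ⟨X, hX, α, hα, rfl⟩
  have hY : Y ∈ S := by
    rcases hS with hS | rfl
    · exact S.mem_of_forall_curryLeft_eq_zero hS fun α hα => by
        simpa using hpair 0 S.zero_mem α hα
    · exact Submodule.mem_top
  refine ⟨Y, hY, β - ω.curryLeft Y, fun Z hZ => ?_, by simp⟩
  have hZY : (ω.curryLeft Z).curryLeft Y + β.curryLeft Z = 0 := by
    simpa using hpair Z hZ 0 fun _ _ => by simp
  have hsub := LinearMap.congr_fun (map_sub AlternatingMap.curryLeftLinearMap β (ω.curryLeft Y)) Z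
  simp only [AlternatingMap.curryLeftLinearMap_apply, LinearMap.sub_apply] at hsub
  rw [hsub, ω.curryLeft_curryLeft_swap Y Z, sub_neg_eq_add, add_comm, hZY]

theorem fst_image_twistedConormal : Prod.fst '' twistedConormal S ω = S := by
  ext X
  constructor
  · rintro ⟨_, ⟨X, hX, α, -, rfl⟩, rfl⟩
    exact hX
  · exact fun hX => ⟨_, ⟨X, hX, 0, fun _ _ => by simp, rfl⟩, rfl⟩

end TwistedConormal

theorem stmt3 [FiniteDimensional ℝ T] (q : ℕ) (hq : q + 1 ≤ finrank ℝ T)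
    (S : Submodule ℝ T)
    (hS : finrank ℝ S ≤ finrank ℝ T - (q+1) ∨ S = ⊤)
    (ω : T [⋀^Fin (q+2)]→ₗ[ℝ] ℝ) :
    ({e : EP T q | ∃ X ∈ S, ∃ α : T [⋀^Fin (q+1)]→ₗ[ℝ] ℝ,
        (∀ Z ∈ S, α.curryLeft Z = 0) ∧ e = (X, ω.curryLeft X + α)} =
      orthSet {e : EP T q | ∃ X ∈ S, ∃ α : T [⋀^Fin (q+1)]→ₗ[ℝ] ℝ,
        (∀ Z ∈ S, α.curryLeft Z = 0) ∧ e = (X, ω.curryLeft X + α)}) ∧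
    Prod.fst '' {e : EP T q | ∃ X ∈ S, ∃ α : T [⋀^Fin (q+1)]→ₗ[ℝ] ℝ,
        (∀ Z ∈ S, α.curryLeft Z = 0) ∧ e = (X, ω.curryLeft X + α)} =
      (S : Set T) := by
  have hcodim : q < finrank ℝ (T ⧸ S) ∨ S = ⊤ := hS.imp_left fun h => by
    have := S.finrank_quotient_add_finrank
    omega
  refine ⟨Set.Subset.antisymm ?_ (orthSet_twistedConormal_subset S ω hcodim),
    fst_image_twistedConormal S ω⟩
  exact fun e he l hl => isIsotropic_twistedConormal S ω e he l hl
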